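/- Let Γʷ(s) be a fixed (rigid, stationary) C¹ space curve observed by a moving camera as in the context, with camera coordinates Γ(s,t) = R(t)Γʷ(s) + 𝑻(t), depth ρ > 0, and image curve γ(s,t) = Γ/ρ. Then at t = 0 the spatial variation of the image velocity field along the curve is γ_st = (−V + V_z γ)(ρ_s/ρ²) − (V_z/ρ)γ_s + Ω̂γ_s − ⟨e₃, Ω̂γ_s⟩γ − ⟨e₃, Ω̂γ⟩γ_s, where the spatial depth derivative satisfies ρ_s = ⟨e₃, Γ_s⟩. -/

import Mathlib

/-! At `t = 0` the scene point moves by `Γ_t = Ω̂Γ + V`, so differentiating the perspective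
projection `γ = Γ / ⟨e₃, Γ⟩` gives the image motion field
`γ_t = Ω̂γ - ⟨e₃, Ω̂γ⟩γ + (V - V_z γ) / ρ`. It depends on `s` only through `γ` and `ρ`, and the
formula for `γ_st` is the product rule applied to it. -/

open scoped RealInnerProductSpace

attribute [local instance] Matrix.frobeniusNormedAddCommGroup Matrix.frobeniusNormedSpace

noncomputable section

/-- ℝ³ with the Euclidean inner product. -/
abbrev V3 : Type := EuclideanSpace ℝ (Fin 3)

/-- The third standard basis vector e₃ = (0,0,1). -/
def e3 : V3 := WithLp.toLp 2 (![0, 0, 1] : Fin 3 → ℝ)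

/-- Matrix–vector multiplication, valued in ℝ³ with the Euclidean structure. -/
def mulV (A : Matrix (Fin 3) (Fin 3) ℝ) (v : V3) : V3 := WithLp.toLp 2 (A.mulVec v)

theorem HasDerivAt.const_inner {E : Type*} [NormedAddCommGroup E] [InnerProductSpace ℝ E]
    {f : ℝ → E} {f' : E} {t : ℝ} (e : E) (hf : HasDerivAt f f' t) :
    HasDerivAt (fun τ => ⟪e, f τ⟫) ⟪e, f'⟫ t :=
  (innerSL ℝ e).hasFDerivAt.comp_hasDerivAt t hf

section MotionField

variable {E : Type*} [NormedAddCommGroup E] [InnerProductSpace ℝ E]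

def motionField (A : E →L[ℝ] E) (e V x : E) (r : ℝ) : E :=
  A x - ⟪e, A x⟫ • x + r⁻¹ • (V - ⟪e, V⟫ • x)

theorem HasDerivAt.perspective_of_rigid {A : E →L[ℝ] E} {e V : E} {c : ℝ → E} {t : ℝ}
    (hc : HasDerivAt c (A (c t) + V) t) (h : ⟪e, c t⟫ ≠ 0) :
    HasDerivAt (fun τ => ⟪e, c τ⟫⁻¹ • c τ) (motionField A e V (⟪e, c t⟫⁻¹ • c t) ⟪e, c t⟫) t := by
  refine (((hc.const_inner e).inv h).smul hc).congr_deriv ?_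
  simp only [motionField, Pi.inv_apply, map_smul, inner_smul_right, inner_add_right]
  match_scalars <;> field_simp; ring

theorem hasDerivAt_motionField (A : E →L[ℝ] E) (e V : E) {g : ℝ → E} {r : ℝ → ℝ} {g' : E}
    {r' s : ℝ} (hg : HasDerivAt g g' s) (hr : HasDerivAt r r' s) (hr0 : r s ≠ 0) :
    HasDerivAt (fun σ => motionField A e V (g σ) (r σ))
      (A g' - ⟪e, A g'⟫ • g s - ⟪e, A (g s)⟫ • g' - (r' / r s ^ 2) • (V - ⟪e, V⟫ • g s)
        - (⟪e, V⟫ / r s) • g') s := by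
  have hAg : HasDerivAt (fun σ => A (g σ)) (A g') s := A.hasFDerivAt.comp_hasDerivAt s hg
  refine ((hAg.sub ((hAg.const_inner e).smul hg)).add
    ((hr.inv hr0).smul ((hasDerivAt_const s V).sub (hg.const_smul ⟪e, V⟫)))).congr_deriv ?_
  simp only [Pi.inv_apply, Pi.sub_apply, Pi.smul_apply, zero_sub]
  match_scalars <;> field_simp <;> ring

end MotionField

theorem mulV_eq_toEuclideanCLM (A : Matrix (Fin 3) (Fin 3) ℝ) (x : V3) :
    mulV A x = Matrix.toEuclideanCLM (𝕜 := ℝ) A x := rfl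

theorem HasDerivAt.mulV_const {R : ℝ → Matrix (Fin 3) (Fin 3) ℝ} {R' : Matrix (Fin 3) (Fin 3) ℝ}
    {t : ℝ} (hR : HasDerivAt R R' t) (x : V3) :
    HasDerivAt (fun τ => mulV (R τ) x) (mulV R' x) t :=
  (((LinearMap.applyₗ x).comp (Matrix.toLpLin 2 2).toLinearMap).toContinuousLinearMap
    |>.hasFDerivAt.comp_hasDerivAt t hR :)

theorem spatial_variation_of_image_velocity_general
    (R R' : ℝ → Matrix (Fin 3) (Fin 3) ℝ)
    (Tr Tr' : ℝ → V3)
    (Γw : ℝ → V3)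
    (Γ : ℝ → ℝ → V3) (Γs : ℝ → V3)
    (ρ : ℝ → ℝ → ℝ) (ρs : ℝ → ℝ)
    (γ γs γt : ℝ → ℝ → V3) (γst : ℝ → V3)
    -- camera motion: R(t) ∈ SO(3), C¹, with R(0) = I, 𝑻(0) = 0
    (hR' : ∀ t, HasDerivAt R (R' t) t)
    (hR0 : R 0 = 1)
    (hTr' : ∀ t, HasDerivAt Tr (Tr' t) t)
    (hTr0 : Tr 0 = 0)
    -- fixed curve in camera coordinates, depth and image
    (hΓ : ∀ s t, Γ s t = mulV (R t) (Γw s) + Tr t)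
    (hΓs : ∀ s, HasDerivAt (fun σ => Γ σ 0) (Γs s) s)
    (hρ : ∀ s t, ρ s t = ⟪e3, Γ s t⟫)
    (hρpos : ∀ s t, 0 < ρ s t)
    (hρs : ∀ s, HasDerivAt (fun σ => ρ σ 0) (ρs s) s)
    (hγ : ∀ s t, γ s t = (ρ s t)⁻¹ • Γ s t)
    -- partial derivatives of the image curve
    (hγs : ∀ s t, HasDerivAt (fun σ => γ σ t) (γs s t) s)
    (hγt : ∀ s t, HasDerivAt (fun τ => γ s τ) (γt s t) t)
    -- mixed partial derivative at t = 0
    (hγst : ∀ s, HasDerivAt (fun σ => γt σ 0) (γst s) s) :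
    -- conclusion at t = 0, with Ω̂ = R′(0)R(0)ᵀ, V = 𝑻′(0), V_z = ⟨e₃,V⟩
    ∀ s,
      (let Ωh := R' 0 * (R 0).transpose
       let V := Tr' 0
       γst s = (ρs s / (ρ s 0) ^ 2) • (-V + ⟪e3, V⟫ • γ s 0)
          - (⟪e3, V⟫ / ρ s 0) • γs s 0
          + mulV Ωh (γs s 0)
          - ⟪e3, mulV Ωh (γs s 0)⟫ • γ s 0
          - ⟪e3, mulV Ωh (γ s 0)⟫ • γs s 0)
      ∧ ρs s = ⟪e3, Γs s⟫ := by
  intro s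
  have hρs_eq : ρs s = ⟪e3, Γs s⟫ :=
    (hρs s).unique <| by simpa only [hρ] using (hΓs s).const_inner e3
  set Ω := Matrix.toEuclideanCLM (𝕜 := ℝ) (R' 0)
  have hΓt : ∀ σ, HasDerivAt (Γ σ) (Ω (Γ σ 0) + Tr' 0) 0 := by
    intro σ
    have hΓw : Γ σ 0 = Γw σ := by simp [hΓ, hR0, hTr0, mulV]
    rw [hΓw, show Γ σ = fun τ => mulV (R τ) (Γw σ) + Tr τ from funext (hΓ σ)]
    exact ((hR' 0).mulV_const (Γw σ)).add (hTr' 0)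
  have hγt0 : ∀ σ, γt σ 0 = motionField Ω e3 (Tr' 0) (γ σ 0) (ρ σ 0) := fun σ =>
    (hγt σ 0).unique <| by
      simp only [hγ, hρ]
      exact (hΓt σ).perspective_of_rigid (hρ σ 0 ▸ (hρpos σ 0).ne')
  have hγst_eq := (hγst s).unique <| by
    rw [show (fun σ => γt σ 0) = _ from funext hγt0]
    exact hasDerivAt_motionField Ω e3 (Tr' 0) (hγs s 0) (hρs s) (hρpos s 0).ne'
  refine ⟨?_, hρs_eq⟩
  simp only [hR0, Matrix.transpose_one, mul_one, mulV_eq_toEuclideanCLM, hγst_eq]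
  module

/-- spatial variation of the image velocity field of a fixed space
curve: at `t = 0`,
`γ_st = (−V + V_zγ)(ρ_s/ρ²) − (V_z/ρ)γ_s + Ω̂γ_s − ⟨e₃,Ω̂γ_s⟩γ − ⟨e₃,Ω̂γ⟩γ_s`,
where `ρ_s = ⟨e₃, Γ_s⟩`. -/
theorem spatial_variation_of_image_velocity
    (R R' : ℝ → Matrix (Fin 3) (Fin 3) ℝ)
    (Tr Tr' : ℝ → V3)
    (Γw : ℝ → V3)
    (Γ : ℝ → ℝ → V3) (Γs : ℝ → V3)
    (ρ : ℝ → ℝ → ℝ) (ρs : ℝ → ℝ)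
    (γ γs γt : ℝ → ℝ → V3) (γst : ℝ → V3)
    -- camera motion: R(t) ∈ SO(3), C¹, with R(0) = I, 𝑻(0) = 0
    (hRorth : ∀ t, R t * (R t).transpose = 1)
    (hRdet : ∀ t, (R t).det = 1)
    (hR' : ∀ t, HasDerivAt R (R' t) t)
    (hR0 : R 0 = 1)
    (hTr' : ∀ t, HasDerivAt Tr (Tr' t) t)
    (hTr0 : Tr 0 = 0)
    -- fixed curve in camera coordinates, depth and image
    (hΓ : ∀ s t, Γ s t = mulV (R t) (Γw s) + Tr t)
    (hΓs : ∀ s, HasDerivAt (fun σ => Γ σ 0) (Γs s) s)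
    (hρ : ∀ s t, ρ s t = ⟪e3, Γ s t⟫)
    (hρpos : ∀ s t, 0 < ρ s t)
    (hρs : ∀ s, HasDerivAt (fun σ => ρ σ 0) (ρs s) s)
    (hγ : ∀ s t, γ s t = (ρ s t)⁻¹ • Γ s t)
    -- partial derivatives of the image curve
    (hγs : ∀ s t, HasDerivAt (fun σ => γ σ t) (γs s t) s)
    (hγt : ∀ s t, HasDerivAt (fun τ => γ s τ) (γt s t) t)
    -- mixed partial derivative at t = 0
    (hγst : ∀ s, HasDerivAt (fun σ => γt σ 0) (γst s) s) :
    -- conclusion at t = 0, with Ω̂ = R′(0)R(0)ᵀ, V = 𝑻′(0), V_z = ⟨e₃,V⟩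
    ∀ s,
      (let Ωh := R' 0 * (R 0).transpose
       let V := Tr' 0
       γst s = (ρs s / (ρ s 0) ^ 2) • (-V + ⟪e3, V⟫ • γ s 0)
          - (⟪e3, V⟫ / ρ s 0) • γs s 0
          + mulV Ωh (γs s 0)
          - ⟪e3, mulV Ωh (γs s 0)⟫ • γ s 0
          - ⟪e3, mulV Ωh (γ s 0)⟫ • γs s 0)
      ∧ ρs s = ⟪e3, Γs s⟫ :=
  spatial_variation_of_image_velocity_general R R' Tr Tr' Γw Γ Γs ρ ρs γ γs γt γst hR' hR0 hTr' hTr0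
    hΓ hΓs hρ hρpos hρs hγ hγs hγt hγst
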